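/- arXiv:1005.5127 — 3 statements merged into one kernel-verified Lean document; each statement's English description precedes it below -/
import Mathlib

section
/- Let f : ℝ^d × ℝ^m → [0,∞) be a measurable log-concave function and define F : ℝ^d → [0,∞] by F(x) = ∫_{ℝ^m} f(x, ξ) dξ (Lebesgue integral, possibly infinite). Then F is log-concave, i.e. F(s·x + t·y) ≥ F(x)^s · F(y)^t in [0,∞] for all x, y ∈ ℝ^d and s, t ≥ 0 with s + t = 1. -/
open MeasureTheory Pointwise ENNReal

noncomputable section

/-- A nonnegative function is log-concave if `f x ^ s * f y ^ t ≤ f (s • x + t • y)`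
for all `x, y` and all `s, t ≥ 0` with `s + t = 1`. -/
def IsLogConcave {E : Type*} [AddCommGroup E] [Module ℝ E] (f : E → ℝ) : Prop :=
  ∀ x y : E, ∀ s t : ℝ, 0 ≤ s → 0 ≤ t → s + t = 1 →
    f x ^ s * f y ^ t ≤ f (s • x + t • y)

/-- The Prékopa–Leindler property of a measure, tested on nonnegative continuous
compactly supported functions. -/
def PrekopaLeindler {E : Type*} [AddCommGroup E] [Module ℝ E] [TopologicalSpace E]
    [MeasurableSpace E] (ρ : Measure E) : Prop :=
  ∀ s t : ℝ, 0 ≤ s → 0 ≤ t → s + t = 1 →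
    ∀ a b c : E → ℝ, Continuous a → Continuous b → Continuous c →
      HasCompactSupport a → HasCompactSupport b → HasCompactSupport c →
      (∀ x, 0 ≤ a x) → (∀ x, 0 ≤ b x) → (∀ x, 0 ≤ c x) →
      (∀ x y, b x ^ s * c y ^ t ≤ a (s • x + t • y)) →
      (∫ x, b x ∂ρ) ^ s * (∫ x, c x ∂ρ) ^ t ≤ ∫ x, a x ∂ρ

/-!
Integrating out one real coordinate at a time reduces the theorem to the one-dimensional
Prékopa–Leindler inequality: if `b x ^ s * c y ^ t ≤ a (s x + t y)` for all `x, y`, then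
`(∫ b) ^ s * (∫ c) ^ t ≤ ∫ a`. After truncating `b` and `c` and rescaling them to have supremum
`1`, their superlevel sets at every level `u ∈ (0, 1)` are nonempty and satisfy
`s • {b > u} + t • {c > u} ⊆ {a > u}`. The one-dimensional Brunn–Minkowski inequality
`|A| + |B| ≤ |A + B|` and the layer-cake formula then give `s ∫ b + t ∫ c ≤ ∫ a`, and the weighted
AM–GM inequality turns this into the multiplicative form.
-/

open Set

namespace ENNReal

lemma geom_mean_le_arith_mean2_weighted {s t : ℝ} (hs : 0 < s) (ht : 0 < t) (hst : s + t = 1)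
    (z w : ℝ≥0∞) :
    z ^ s * w ^ t ≤ ENNReal.ofReal s * z + ENNReal.ofReal t * w := by
  have := young_inequality (z ^ s) (w ^ t) (Real.HolderConjugate.inv_inv hs ht hst)
  simpa [← ENNReal.rpow_mul, hs, ht, hs.ne', ht.ne', div_eq_mul_inv, mul_comm] using this

lemma iSup_rpow {ι : Type*} (f : ι → ℝ≥0∞) {s : ℝ} (hs : 0 < s) :
    (⨆ i, f i) ^ s = ⨆ i, f i ^ s :=
  (orderIsoRpow s hs).map_iSup f

lemma iSup_mul_iSup_of_monotone {ι : Type*} [Preorder ι] [IsDirectedOrder ι]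
    {f g : ι → ℝ≥0∞} (hf : Monotone f) (hg : Monotone g) :
    (⨆ i, f i) * ⨆ i, g i = ⨆ i, f i * g i := by
  refine le_antisymm ?_ iSup_mul_le
  simp only [ENNReal.iSup_mul, ENNReal.mul_iSup]
  refine iSup₂_le fun j i => ?_
  obtain ⟨k, hik, hjk⟩ := exists_ge_ge i j
  exact le_iSup_of_le k (mul_le_mul' (hf hik) (hg hjk))

end ENNReal

namespace Real

lemma volume_add_volume_le_volume_add_of_isCompact {K L : Set ℝ} (hK : IsCompact K)
    (hL : IsCompact L) (hK₀ : K.Nonempty) (hL₀ : L.Nonempty) :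
    volume K + volume L ≤ volume (K + L) := by
  set k := sSup K
  set l := sInf L
  -- The translates `l +ᵥ K` and `k +ᵥ L` both lie in `K + L` and meet only at `k + l`.
  have hXY : (l +ᵥ K) ∩ (k +ᵥ L) ⊆ {k + l} := by
    rintro _ ⟨⟨x, hx, rfl⟩, ⟨y, hy, hyx⟩⟩
    have hxk : x ≤ k := le_csSup hK.bddAbove hx
    have hly : l ≤ y := csInf_le hL.bddBelow hy
    simp only [vadd_eq_add] at hyx
    simp only [vadd_eq_add, mem_singleton_iff]
    linarith
  have hsub : (l +ᵥ K) ∪ (k +ᵥ L) ⊆ K + L := by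
    rw [← singleton_vadd, ← singleton_vadd, vadd_eq_add, vadd_eq_add, add_comm ({l} : Set ℝ)]
    exact union_subset (add_subset_add_left (singleton_subset_iff.2 (hL.sInf_mem hL₀)))
      (add_subset_add_right (singleton_subset_iff.2 (hK.sSup_mem hK₀)))
  calc volume K + volume L = volume (l +ᵥ K) + volume (k +ᵥ L) := by
        rw [measure_vadd, measure_vadd]
    _ = volume ((l +ᵥ K) ∪ (k +ᵥ L)) := by
        rw [← measure_union_add_inter _ (hL.vadd k).measurableSet,
          measure_mono_null hXY (measure_singleton _), add_zero]
    _ ≤ volume (K + L) := measure_mono hsub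

theorem volume_add_volume_le_volume_add {A B : Set ℝ} (hA : MeasurableSet A)
    (hB : MeasurableSet B) (hA₀ : A.Nonempty) (hB₀ : B.Nonempty) :
    volume A + volume B ≤ volume (A + B) := by
  obtain ⟨a, ha⟩ := hA₀
  obtain ⟨b, hb⟩ := hB₀
  rw [hA.measure_eq_iSup_isCompact, hB.measure_eq_iSup_isCompact]
  simp only [iSup_and']
  refine ENNReal.biSup_add_biSup_le' ⟨∅, empty_subset _, isCompact_empty⟩
    ⟨∅, empty_subset _, isCompact_empty⟩ ?_
  rintro K ⟨hKA, hK⟩ L ⟨hLB, hL⟩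
  calc volume K + volume L ≤ volume (insert a K) + volume (insert b L) :=
        add_le_add (measure_mono (subset_insert _ _)) (measure_mono (subset_insert _ _))
    _ ≤ volume (insert a K + insert b L) :=
        volume_add_volume_le_volume_add_of_isCompact (hK.insert a) (hL.insert b)
          (insert_nonempty _ _) (insert_nonempty _ _)
    _ ≤ volume (A + B) :=
        measure_mono (add_subset_add (insert_subset ha hKA) (insert_subset hb hLB))

end Real

section Lintegral

variable {α : Type*} [MeasurableSpace α] {μ : Measure α}

lemma lintegral_div_const (f : α → ℝ≥0∞) {r : ℝ≥0∞} (hr : r ≠ 0) :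
    ∫⁻ x, f x / r ∂μ = (∫⁻ x, f x ∂μ) / r := by
  simp only [div_eq_mul_inv, lintegral_mul_const' _ _ (ENNReal.inv_ne_top.2 hr)]

lemma lintegral_eq_iSup_lintegral_min {f : α → ℝ≥0∞} (hf : Measurable f) :
    ∫⁻ x, f x ∂μ = ⨆ n : ℕ, ∫⁻ x, min (f x) n ∂μ := by
  rw [← lintegral_iSup (fun n => hf.min measurable_const)
    fun m n hmn x => min_le_min_left _ (Nat.cast_le.2 hmn)]
  congr with x
  rw [← inf_iSup_eq, ENNReal.iSup_natCast, inf_top_eq]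

lemma lintegral_eq_setLIntegral_Ioo_measure_lt {g : α → ℝ≥0∞} (hg : Measurable g)
    (hg_le : ∀ x, g x ≤ 1) :
    ∫⁻ x, g x ∂μ = ∫⁻ u in Ioo 0 1, μ {x | ENNReal.ofReal u < g x} := by
  have hg_top x : g x ≠ ∞ := ((hg_le x).trans_lt ENNReal.one_lt_top).ne
  have hempty : ∀ u ∈ Ici (1 : ℝ), μ {x | ENNReal.ofReal u < g x} = 0 := fun u hu => by
    convert measure_empty (μ := μ)
    refine eq_empty_of_forall_notMem fun x hx => (hg_le x).not_gt (hx.trans_le' ?_)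
    simpa using ENNReal.ofReal_le_ofReal (mem_Ici.1 hu)
  calc ∫⁻ x, g x ∂μ = ∫⁻ x, ENNReal.ofReal (g x).toReal ∂μ := by
        simp only [ENNReal.ofReal_toReal (hg_top _)]
    _ = ∫⁻ u in Ioi 0, μ {x | u < (g x).toReal} :=
        lintegral_eq_lintegral_meas_lt μ (ae_of_all _ fun _ => ENNReal.toReal_nonneg)
          hg.ennreal_toReal.aemeasurable
    _ = ∫⁻ u in Ioi 0, μ {x | ENNReal.ofReal u < g x} :=
        setLIntegral_congr_fun measurableSet_Ioi fun u hu => by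
          simp only [ENNReal.ofReal_lt_iff_lt_toReal (le_of_lt hu) (hg_top _)]
    _ = ∫⁻ u in Ioo 0 1, μ {x | ENNReal.ofReal u < g x} := by
        rw [← Ioo_union_Ici_eq_Ioi zero_lt_one,
          lintegral_union measurableSet_Ici
            ((Iio_disjoint_Ici le_rfl).mono_left Ioo_subset_Iio_self),
          setLIntegral_eq_zero measurableSet_Ici hempty, add_zero]

end Lintegral

section PrekopaLeindler

variable {s t : ℝ}

lemma smul_superlevel_add_smul_superlevel_subset {E : Type*} [AddCommGroup E] [Module ℝ E]
    {a b c : E → ℝ≥0∞} (hs : 0 < s) (ht : 0 < t) (hst : s + t = 1)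
    (h : ∀ x y, b x ^ s * c y ^ t ≤ a (s • x + t • y)) (u : ℝ≥0∞) :
    s • {x | u < b x} + t • {y | u < c y} ⊆ {z | u < a z} := by
  rintro _ ⟨_, ⟨x, hx, rfl⟩, _, ⟨y, hy, rfl⟩, rfl⟩
  calc u = u ^ s * u ^ t := by
        rw [← ENNReal.rpow_add_of_nonneg _ _ hs.le ht.le, hst, ENNReal.rpow_one]
    _ < b x ^ s * c y ^ t :=
        ENNReal.mul_lt_mul (ENNReal.rpow_lt_rpow hx hs) (ENNReal.rpow_lt_rpow hy ht)
    _ ≤ a (s • x + t • y) := h x y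

lemma lintegral_prekopaLeindler_of_iSup_eq_one {a b c : ℝ → ℝ≥0∞} (ha : Measurable a)
    (hb : Measurable b) (hc : Measurable c) (ha_le : ∀ x, a x ≤ 1) (hb_sup : ⨆ x, b x = 1)
    (hc_sup : ⨆ x, c x = 1) (hs : 0 < s) (ht : 0 < t) (hst : s + t = 1)
    (h : ∀ x y, b x ^ s * c y ^ t ≤ a (s • x + t • y)) :
    ENNReal.ofReal s * (∫⁻ x, b x) + ENNReal.ofReal t * ∫⁻ x, c x ≤ ∫⁻ x, a x := by
  have superlevel_nonempty {g : ℝ → ℝ≥0∞} (hg : ⨆ x, g x = 1) (u : ℝ) (hu : u ∈ Ioo 0 1) :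
      {x | ENNReal.ofReal u < g x}.Nonempty :=
    let ⟨x, hx⟩ := lt_iSup_iff.1 (hg ▸ ENNReal.ofReal_lt_one.2 hu.2)
    ⟨x, hx⟩
  have superlevel_ineq : ∀ u ∈ Ioo (0 : ℝ) 1,
      ENNReal.ofReal s * volume {x | ENNReal.ofReal u < b x}
        + ENNReal.ofReal t * volume {x | ENNReal.ofReal u < c x}
        ≤ volume {x | ENNReal.ofReal u < a x} := fun u hu => by
    calc _ = volume (s • {x | ENNReal.ofReal u < b x})
          + volume (t • {x | ENNReal.ofReal u < c x}) := by
          simp [abs_of_pos hs, abs_of_pos ht]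
      _ ≤ volume (s • {x | ENNReal.ofReal u < b x} + t • {x | ENNReal.ofReal u < c x}) :=
          Real.volume_add_volume_le_volume_add ((hb measurableSet_Ioi).const_smul₀ s)
            ((hc measurableSet_Ioi).const_smul₀ t)
            (superlevel_nonempty hb_sup u hu).smul_set (superlevel_nonempty hc_sup u hu).smul_set
      _ ≤ _ := measure_mono (smul_superlevel_add_smul_superlevel_subset hs ht hst h _)
  have hb_le x : b x ≤ 1 := hb_sup ▸ le_iSup b x
  have hc_le x : c x ≤ 1 := hc_sup ▸ le_iSup c x
  rw [lintegral_eq_setLIntegral_Ioo_measure_lt ha ha_le,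
    lintegral_eq_setLIntegral_Ioo_measure_lt hb hb_le,
    lintegral_eq_setLIntegral_Ioo_measure_lt hc hc_le,
    ← lintegral_const_mul' _ _ ENNReal.ofReal_ne_top,
    ← lintegral_const_mul' _ _ ENNReal.ofReal_ne_top]
  exact (le_lintegral_add _ _).trans (setLIntegral_mono' measurableSet_Ioo superlevel_ineq)

lemma lintegral_prekopaLeindler_of_iSup_ne_top {a b c : ℝ → ℝ≥0∞} (ha : Measurable a)
    (hb : Measurable b) (hc : Measurable c) (hb_top : ⨆ x, b x ≠ ∞) (hc_top : ⨆ x, c x ≠ ∞)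
    (hs : 0 < s) (ht : 0 < t) (hst : s + t = 1)
    (h : ∀ x y, b x ^ s * c y ^ t ≤ a (s • x + t • y)) :
    (∫⁻ x, b x) ^ s * (∫⁻ x, c x) ^ t ≤ ∫⁻ x, a x := by
  set β := ⨆ x, b x
  set γ := ⨆ x, c x
  rcases eq_or_ne β 0 with hβ | hβ
  · simp [ENNReal.iSup_eq_zero.1 hβ, hs]
  rcases eq_or_ne γ 0 with hγ | hγ
  · simp [ENNReal.iSup_eq_zero.1 hγ, ht]
  have hβs : β ^ s ≠ 0 := (ENNReal.rpow_pos (pos_iff_ne_zero.2 hβ) hb_top).ne'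
  have hγt : γ ^ t ≠ 0 := (ENNReal.rpow_pos (pos_iff_ne_zero.2 hγ) hc_top).ne'
  have hβs_top : β ^ s ≠ ∞ := ENNReal.rpow_ne_top_of_nonneg hs.le hb_top
  have hγt_top : γ ^ t ≠ ∞ := ENNReal.rpow_ne_top_of_nonneg ht.le hc_top
  set D := β ^ s * γ ^ t with hD
  have hD0 : D ≠ 0 := mul_ne_zero hβs hγt
  have hDtop : D ≠ ∞ := ENNReal.mul_ne_top hβs_top hγt_top
  have rescale (p q : ℝ≥0∞) : (p / β) ^ s * (q / γ) ^ t = p ^ s * q ^ t / D := by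
    rw [ENNReal.div_rpow_of_nonneg _ _ hs.le, ENNReal.div_rpow_of_nonneg _ _ ht.le,
      div_eq_mul_inv, div_eq_mul_inv, div_eq_mul_inv, hD,
      ENNReal.mul_inv (Or.inl hβs) (Or.inl hβs_top)]
    ring
  have normalized := lintegral_prekopaLeindler_of_iSup_eq_one
    (a := fun z => min (a z / D) 1) (b := fun x => b x / β) (c := fun y => c y / γ)
    ((ha.div_const D).min measurable_const) (hb.div_const β) (hc.div_const γ)
    (fun z => min_le_right _ _) (by rw [← ENNReal.iSup_div, ENNReal.div_self hβ hb_top])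
    (by rw [← ENNReal.iSup_div, ENNReal.div_self hγ hc_top]) hs ht hst fun x y =>
    (rescale _ _).trans_le <| le_min (ENNReal.div_le_div_right (h x y) D)
      ((ENNReal.div_le_div_right (mul_le_mul' (ENNReal.rpow_le_rpow (le_iSup b x) hs.le)
        (ENNReal.rpow_le_rpow (le_iSup c y) ht.le)) D).trans_eq (ENNReal.div_self hD0 hDtop))
  have : (∫⁻ x, b x) ^ s * (∫⁻ x, c x) ^ t / D ≤ (∫⁻ x, a x) / D :=
    calc _ = (∫⁻ x, b x / β) ^ s * (∫⁻ y, c y / γ) ^ t := by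
          rw [lintegral_div_const _ hβ, lintegral_div_const _ hγ, rescale]
      _ ≤ ENNReal.ofReal s * (∫⁻ x, b x / β) + ENNReal.ofReal t * ∫⁻ y, c y / γ :=
          ENNReal.geom_mean_le_arith_mean2_weighted hs ht hst _ _
      _ ≤ ∫⁻ z, min (a z / D) 1 := normalized
      _ ≤ ∫⁻ z, a z / D := lintegral_mono fun z => min_le_left _ _
      _ = (∫⁻ x, a x) / D := lintegral_div_const _ hD0
  rwa [ENNReal.div_le_iff hD0 hDtop, ENNReal.div_mul_cancel hD0 hDtop] at this

theorem lintegral_prekopaLeindler {a b c : ℝ → ℝ≥0∞} (ha : Measurable a) (hb : Measurable b)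
    (hc : Measurable c) (hs : 0 ≤ s) (ht : 0 ≤ t) (hst : s + t = 1)
    (h : ∀ x y, b x ^ s * c y ^ t ≤ a (s • x + t • y)) :
    (∫⁻ x, b x) ^ s * (∫⁻ x, c x) ^ t ≤ ∫⁻ x, a x := by
  rcases hs.eq_or_lt with rfl | hs
  · obtain rfl : t = 1 := by linarith
    simpa using lintegral_mono fun y => by simpa using h y y
  rcases ht.eq_or_lt with rfl | ht
  · obtain rfl : s = 1 := by linarith
    simpa using lintegral_mono fun x => by simpa using h x x
  have hmono (g : ℝ → ℝ≥0∞) {r : ℝ} (hr : 0 < r) :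
      Monotone fun n : ℕ => (∫⁻ x, min (g x) n) ^ r := fun m n hmn =>
    ENNReal.rpow_le_rpow (lintegral_mono fun x => min_le_min_left _ (Nat.cast_le.2 hmn)) hr.le
  have htrunc_top (g : ℝ → ℝ≥0∞) (n : ℕ) : ⨆ x, min (g x) n ≠ ∞ :=
    ne_top_of_le_ne_top (ENNReal.natCast_ne_top n) (iSup_le fun x => min_le_right _ _)
  rw [lintegral_eq_iSup_lintegral_min hb, lintegral_eq_iSup_lintegral_min hc,
    ENNReal.iSup_rpow _ hs, ENNReal.iSup_rpow _ ht,
    ENNReal.iSup_mul_iSup_of_monotone (hmono b hs) (hmono c ht)]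
  exact iSup_le fun n => lintegral_prekopaLeindler_of_iSup_ne_top ha
    (hb.min measurable_const) (hc.min measurable_const) (htrunc_top b n) (htrunc_top c n)
    hs ht hst fun x y => (mul_le_mul' (ENNReal.rpow_le_rpow (min_le_left _ _) hs.le)
      (ENNReal.rpow_le_rpow (min_le_left _ _) ht.le)).trans (h x y)

end PrekopaLeindler

def IsLogConcaveENNReal {E : Type*} [AddCommGroup E] [Module ℝ E] (g : E → ℝ≥0∞) : Prop :=
  ∀ x y : E, ∀ s t : ℝ, 0 ≤ s → 0 ≤ t → s + t = 1 → g x ^ s * g y ^ t ≤ g (s • x + t • y)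

section LogConcave

variable {E F : Type*} [AddCommGroup E] [Module ℝ E] [AddCommGroup F] [Module ℝ F]

lemma IsLogConcave.ofReal {f : E → ℝ} (hf : IsLogConcave f) (hf0 : ∀ x, 0 ≤ f x) :
    IsLogConcaveENNReal fun x => ENNReal.ofReal (f x) := fun x y s t hs ht hst => by
  rw [ENNReal.ofReal_rpow_of_nonneg (hf0 _) hs, ENNReal.ofReal_rpow_of_nonneg (hf0 _) ht,
    ← ENNReal.ofReal_mul (Real.rpow_nonneg (hf0 _) _)]
  exact ENNReal.ofReal_le_ofReal (hf x y s t hs ht hst)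

lemma IsLogConcaveENNReal.comp_linearMap {g : E → ℝ≥0∞} (hg : IsLogConcaveENNReal g)
    (L : F →ₗ[ℝ] E) : IsLogConcaveENNReal fun x => g (L x) := fun x y s t hs ht hst => by
  simpa only [map_add, map_smul] using hg (L x) (L y) s t hs ht hst

theorem IsLogConcaveENNReal.lintegral_prod_real {g : E × ℝ → ℝ≥0∞}
    (hg : ∀ x, Measurable fun τ => g (x, τ)) (hlc : IsLogConcaveENNReal g) :
    IsLogConcaveENNReal fun x => ∫⁻ τ, g (x, τ) := fun x y s t hs ht hst =>
  lintegral_prekopaLeindler (hg _) (hg x) (hg y) hs ht hst fun ξ τ => by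
    simpa using hlc (x, ξ) (y, τ) s t hs ht hst

end LogConcave

theorem IsLogConcaveENNReal.lintegral_pi {E : Type*} [AddCommGroup E] [Module ℝ E]
    [MeasurableSpace E] {m : ℕ} {g : E × (Fin m → ℝ) → ℝ≥0∞} (hg : Measurable g)
    (hlc : IsLogConcaveENNReal g) : IsLogConcaveENNReal fun x => ∫⁻ ξ, g (x, ξ) := by
  induction m generalizing E with
  | zero =>
    have hvol : (volume : Measure (Fin 0 → ℝ)) univ = 1 := by simp [volume_pi]
    have : (fun x => ∫⁻ ξ, g (x, ξ)) = fun x => g (LinearMap.inl ℝ E (Fin 0 → ℝ) x) := by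
      ext x
      rw [lintegral_unique, hvol, mul_one]
      exact congrArg (fun ξ => g (x, ξ)) (Subsingleton.elim _ _)
    exact this ▸ hlc.comp_linearMap _
  | succ m ih =>
    let C := Fin.consLinearEquiv ℝ fun _ : Fin (m + 1) => ℝ
    have hC_eq : ⇑C = (MeasurableEquiv.piFinSuccAbove (fun _ : Fin (m + 1) => ℝ) 0).symm := by
      ext p; simp [C]
    have hC : MeasurePreserving C volume volume :=
      hC_eq ▸ (volume_preserving_piFinSuccAbove (fun _ : Fin (m + 1) => ℝ) 0).symm _
    let L : (E × (Fin m → ℝ)) × ℝ →ₗ[ℝ] E × (Fin (m + 1) → ℝ) :=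
      (LinearMap.fst ℝ E _ ∘ₗ LinearMap.fst ℝ _ ℝ).prod
        (C.toLinearMap ∘ₗ (LinearMap.snd ℝ _ ℝ).prod (LinearMap.snd ℝ E _ ∘ₗ LinearMap.fst ℝ _ ℝ))
    have hCm : Measurable C := hC.measurable
    have hgL : Measurable fun q => g (L q) :=
      show Measurable fun q : (E × (Fin m → ℝ)) × ℝ => g (q.1.1, C (q.2, q.1.2)) by fun_prop
    have marginal_eq (x : E) : ∫⁻ ξ, g (x, ξ) = ∫⁻ ξ, ∫⁻ τ, g (L ((x, ξ), τ)) :=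
      calc ∫⁻ ξ, g (x, ξ) = ∫⁻ p, g (x, C p) := (hC.lintegral_comp (by fun_prop)).symm
        _ = ∫⁻ ξ, ∫⁻ τ, g (x, C (τ, ξ)) := lintegral_prod_symm _ (by fun_prop)
    simpa only [marginal_eq] using ih hgL.lintegral_prod_right'
      ((hlc.comp_linearMap L).lintegral_prod_real fun p => hgL.comp measurable_prodMk_left)

/-- If `f` is a measurable nonnegative log-concave function on
`ℝ^d × ℝ^m`, then `F x = ∫ f (x, ξ) dξ` (possibly infinite) is log-concave. -/
theorem marginal_isLogConcave {d m : ℕ}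
    (f : EuclideanSpace ℝ (Fin d) × EuclideanSpace ℝ (Fin m) → ℝ)
    (hmeas : Measurable f) (hf0 : ∀ p, 0 ≤ f p) (hflc : IsLogConcave f) :
    ∀ x y : EuclideanSpace ℝ (Fin d), ∀ s t : ℝ, 0 ≤ s → 0 ≤ t → s + t = 1 →
      (∫⁻ ξ, ENNReal.ofReal (f (x, ξ))) ^ s * (∫⁻ ξ, ENNReal.ofReal (f (y, ξ))) ^ t
        ≤ ∫⁻ ξ, ENNReal.ofReal (f (s • x + t • y, ξ)) := by
  let L := (LinearMap.id : EuclideanSpace ℝ (Fin d) →ₗ[ℝ] _).prodMap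
    (WithLp.linearEquiv 2 ℝ (Fin m → ℝ)).symm.toLinearMap
  have hg : IsLogConcaveENNReal fun p => ENNReal.ofReal (f (L p)) :=
    (hflc.ofReal hf0).comp_linearMap L
  have marginal_eq (x : EuclideanSpace ℝ (Fin d)) :
      ∫⁻ ξ, ENNReal.ofReal (f (x, ξ)) = ∫⁻ ξ, ENNReal.ofReal (f (L (x, ξ))) :=
    ((PiLp.volume_preserving_toLp (Fin m)).lintegral_comp (by fun_prop)).symm
  simp only [marginal_eq]
  exact hg.lintegral_pi (by fun_prop)
end
end

section
/- Let α, σ, δ > 0 satisfy 1/δ − 1/α > σ, and let ρ be a finite Borel measure on ℝ^n that is α-super log-concave. Let p_σ(x) = exp(−|x|²/(2σ)). Then the measure on ℝ^n with Lebesgue density x ↦ ∫ p_σ(x − y) dρ(y) is δ-super log-concave; equivalently, the function x ↦ exp(δ|x|²/2) · ∫ p_σ(x − y) dρ(y) is log-concave on ℝ^n. -/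
/-!
With `μ = e^{α|y|²/2} ρ`, the function in question is `x ↦ ∫ G(x, y) dμ(y)`, where
`G(x, y) = exp (δ|x|²/2 - |x - y|²/(2σ) - α|y|²/2)`. The exponent is a quadratic form in `(x, y)`;
writing `x = (x - y) + y`, Cauchy–Schwarz with weights `σ` and `1/α` shows it is nonpositive
when `σ ≤ 1/δ - 1/α`, so it is concave and `G` is jointly log-concave. This is Prékopa's
setting: for fixed `x, x'`, the Prékopa–Leindler property of `μ` applied to `G(x, ·)`, `G(x', ·)`
and `G(s x + t x', ·)`, each multiplied by a log-concave compactly supported cutoff, gives the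
log-concavity inequality for the truncated integrals, and dominated convergence removes the
cutoff.
-/

open MeasureTheory Pointwise ENNReal

noncomputable section

/-- A measure `ρ` on `ℝ^n` is `α`-super log-concave if the measure with density
`x ↦ exp (α/2 * |x|^2)` with respect to `ρ` satisfies the Prékopa–Leindler property. -/
def SuperLogConcave {n : ℕ} (α : ℝ) (ρ : Measure (EuclideanSpace ℝ (Fin n))) : Prop :=
  PrekopaLeindler (ρ.withDensity fun x => ENNReal.ofReal (Real.exp (α / 2 * ‖x‖ ^ 2)))

open Real Filter Topology Set

section LogConcave

variable {E F : Type*} [AddCommGroup E] [Module ℝ E] [AddCommGroup F] [Module ℝ F]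

lemma ConcaveOn.isLogConcave_exp {f : E → ℝ} (hf : ConcaveOn ℝ univ f) :
    IsLogConcave fun x => exp (f x) := by
  intro x y s t hs ht hst
  rw [← exp_mul, ← exp_mul, ← exp_add, exp_le_exp, mul_comm (f x), mul_comm (f y)]
  exact hf.2 (mem_univ x) (mem_univ y) hs ht hst

lemma ConcaveOn.isLogConcave_max_zero {f : E → ℝ} (hf : ConcaveOn ℝ univ f) :
    IsLogConcave fun x => max 0 (f x) := by
  intro x y s t hs ht hst
  dsimp only
  rcases le_or_gt (f x) 0 with hx | hx
  · rcases hs.eq_or_lt with rfl | hs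
    · obtain rfl : t = 1 := by linarith
      simp
    · simp [max_eq_left hx, zero_rpow hs.ne']
  rcases le_or_gt (f y) 0 with hy | hy
  · rcases ht.eq_or_lt with rfl | ht
    · obtain rfl : s = 1 := by linarith
      simp
    · simp [max_eq_left hy, zero_rpow ht.ne']
  rw [max_eq_right hx.le, max_eq_right hy.le]
  calc f x ^ s * f y ^ t ≤ s * f x + t * f y :=
        geom_mean_le_arith_mean2_weighted hs ht hx.le hy.le hst
    _ ≤ f (s • x + t • y) := hf.2 (mem_univ x) (mem_univ y) hs ht hst
    _ ≤ max 0 (f (s • x + t • y)) := le_max_right _ _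

lemma IsLogConcave.mul {f g : E → ℝ} (hf : IsLogConcave f) (hg : IsLogConcave g)
    (hf0 : ∀ x, 0 ≤ f x) (hg0 : ∀ x, 0 ≤ g x) : IsLogConcave fun x => f x * g x := by
  intro x y s t hs ht hst
  calc (f x * g x) ^ s * (f y * g y) ^ t = (f x ^ s * f y ^ t) * (g x ^ s * g y ^ t) := by
        rw [mul_rpow (hf0 x) (hg0 x), mul_rpow (hf0 y) (hg0 y)]; ring
    _ ≤ f (s • x + t • y) * g (s • x + t • y) :=
        mul_le_mul (hf x y s t hs ht hst) (hg x y s t hs ht hst)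
          (mul_nonneg (rpow_nonneg (hg0 x) s) (rpow_nonneg (hg0 y) t)) (hf0 _)

lemma IsLogConcave.comp_linearMap {f : E → ℝ} (hf : IsLogConcave f) (L : F →ₗ[ℝ] E) :
    IsLogConcave (f ∘ L) := by
  intro x y s t hs ht hst
  simpa using hf (L x) (L y) s t hs ht hst

end LogConcave

section Cutoff

variable {E : Type*} [NormedAddCommGroup E]

def radialCutoff (k : ℕ) (y : E) : ℝ := max 0 (min 1 (k - ‖y‖))

lemma continuous_radialCutoff (k : ℕ) : Continuous (radialCutoff (E := E) k) := by
  unfold radialCutoff; fun_prop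

lemma radialCutoff_nonneg (k : ℕ) (y : E) : 0 ≤ radialCutoff k y := le_max_left _ _

lemma radialCutoff_le_one (k : ℕ) (y : E) : radialCutoff k y ≤ 1 :=
  max_le zero_le_one (min_le_left _ _)

lemma hasCompactSupport_radialCutoff [ProperSpace E] (k : ℕ) :
    HasCompactSupport (radialCutoff (E := E) k) := by
  refine HasCompactSupport.intro (isCompact_closedBall 0 k) fun y hy => ?_
  rw [Metric.mem_closedBall, dist_zero_right, not_le] at hy
  exact max_eq_left ((min_le_right _ _).trans (by linarith))

lemma isLogConcave_radialCutoff [NormedSpace ℝ E] (k : ℕ) :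
    IsLogConcave (radialCutoff (E := E) k) :=
  ((concaveOn_const 1 convex_univ).inf
    ((concaveOn_const (k : ℝ) convex_univ).sub (convexOn_norm convex_univ))).isLogConcave_max_zero

lemma eventually_radialCutoff_eq_one (y : E) : ∀ᶠ k in atTop, radialCutoff k y = 1 := by
  filter_upwards [eventually_ge_atTop ⌈‖y‖ + 1⌉₊] with k hk
  have : ‖y‖ + 1 ≤ k := (Nat.le_ceil _).trans (by exact_mod_cast hk)
  rw [radialCutoff, min_eq_left (by linarith), max_eq_right zero_le_one]

lemma tendsto_integral_mul_radialCutoff [MeasurableSpace E] [OpensMeasurableSpace E]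
    {μ : Measure E} {f : E → ℝ} (hf : Integrable f μ) :
    Tendsto (fun k : ℕ => ∫ y, f y * radialCutoff k y ∂μ) atTop (𝓝 (∫ y, f y ∂μ)) := by
  refine tendsto_integral_of_dominated_convergence (fun y => ‖f y‖)
    (fun k => hf.aestronglyMeasurable.mul (continuous_radialCutoff k).aestronglyMeasurable)
    hf.norm (fun k => ae_of_all _ fun y => ?_) (ae_of_all _ fun y => ?_)
  · rw [norm_mul, Real.norm_of_nonneg (radialCutoff_nonneg k y)]
    exact mul_le_of_le_one_right (norm_nonneg _) (radialCutoff_le_one k y)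
  · refine tendsto_const_nhds.congr' ?_
    filter_upwards [eventually_radialCutoff_eq_one y] with k hk
    rw [hk, mul_one]

end Cutoff

theorem PrekopaLeindler.isLogConcave_integral {E F : Type*} [NormedAddCommGroup E]
    [NormedSpace ℝ E] [ProperSpace E] [MeasurableSpace E] [OpensMeasurableSpace E]
    [AddCommGroup F] [Module ℝ F] {μ : Measure E} (hμ : PrekopaLeindler μ) {G : F → E → ℝ}
    (hG : IsLogConcave (Function.uncurry G)) (hG0 : ∀ x y, 0 ≤ G x y)
    (hGc : ∀ x, Continuous (G x)) (hGi : ∀ x, Integrable (G x) μ) :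
    IsLogConcave fun x => ∫ y, G x y ∂μ := by
  intro x x' s t hs ht hst
  have hGχ (k : ℕ) : IsLogConcave fun p : F × E => G p.1 p.2 * radialCutoff k p.2 :=
    hG.mul ((isLogConcave_radialCutoff k).comp_linearMap (LinearMap.snd ℝ F E))
      (fun p => hG0 p.1 p.2) (fun p => radialCutoff_nonneg k p.2)
  have htrunc (k : ℕ) : (∫ y, G x y * radialCutoff k y ∂μ) ^ s *
      (∫ y, G x' y * radialCutoff k y ∂μ) ^ t ≤
        ∫ y, G (s • x + t • x') y * radialCutoff k y ∂μ :=
    hμ s t hs ht hst _ _ _ ((hGc _).mul (continuous_radialCutoff k))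
      ((hGc _).mul (continuous_radialCutoff k)) ((hGc _).mul (continuous_radialCutoff k))
      (hasCompactSupport_radialCutoff k).mul_left (hasCompactSupport_radialCutoff k).mul_left
      (hasCompactSupport_radialCutoff k).mul_left
      (fun y => mul_nonneg (hG0 _ y) (radialCutoff_nonneg k y))
      (fun y => mul_nonneg (hG0 _ y) (radialCutoff_nonneg k y))
      (fun y => mul_nonneg (hG0 _ y) (radialCutoff_nonneg k y))
      fun y y' => hGχ k (x, y) (x', y') s t hs ht hst
  exact le_of_tendsto_of_tendsto'
    (((tendsto_integral_mul_radialCutoff (hGi x)).rpow_const (Or.inr hs)).mul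
      ((tendsto_integral_mul_radialCutoff (hGi x')).rpow_const (Or.inr ht)))
    (tendsto_integral_mul_radialCutoff (hGi _)) htrunc

section WithDensity

variable {X : Type*} [MeasurableSpace X] {μ : Measure X} {w : X → ℝ}

lemma integral_withDensity_ofReal (hw : Measurable w) (hw0 : ∀ x, 0 ≤ w x) (g : X → ℝ) :
    ∫ x, g x ∂μ.withDensity (fun x => ENNReal.ofReal (w x)) = ∫ x, w x * g x ∂μ := by
  rw [integral_withDensity_eq_integral_toReal_smul hw.ennreal_ofReal
    (ae_of_all _ fun _ => ofReal_lt_top)]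
  simp_rw [toReal_ofReal (hw0 _), smul_eq_mul]

lemma integrable_withDensity_ofReal_iff (hw : Measurable w) (hw0 : ∀ x, 0 ≤ w x) {g : X → ℝ} :
    Integrable g (μ.withDensity fun x => ENNReal.ofReal (w x)) ↔
      Integrable (fun x => w x * g x) μ := by
  rw [integrable_withDensity_iff_integrable_smul' hw.ennreal_ofReal
    (ae_of_all _ fun _ => ofReal_lt_top)]
  simp_rw [toReal_ofReal (hw0 _), smul_eq_mul]

end WithDensity

lemma sq_add_le_mul_div_add_div {P R : ℝ} (hP : 0 < P) (hR : 0 < R) (u v : ℝ) :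
    (u + v) ^ 2 ≤ (P + R) * (u ^ 2 / P + v ^ 2 / R) := by
  rw [div_add_div _ _ hP.ne' hR.ne', mul_div_assoc', le_div_iff₀ (by positivity)]
  nlinarith [sq_nonneg (R * u - P * v)]

lemma norm_smul_add_smul_sq {E : Type*} [NormedAddCommGroup E] [InnerProductSpace ℝ E] {s t : ℝ}
    (hst : s + t = 1) (u v : E) :
    ‖s • u + t • v‖ ^ 2 = s * ‖u‖ ^ 2 + t * ‖v‖ ^ 2 - s * t * ‖u - v‖ ^ 2 := by
  rw [norm_add_sq_real, norm_sub_sq_real, norm_smul, norm_smul, real_inner_smul_left,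
    real_inner_smul_right, mul_pow, mul_pow, Real.norm_eq_abs, Real.norm_eq_abs, sq_abs, sq_abs]
  obtain rfl := eq_sub_of_add_eq hst
  ring

section GaussianKernel

variable {E : Type*} [NormedAddCommGroup E]

def gaussianKernelExponent (α σ δ : ℝ) (p : E × E) : ℝ :=
  δ / 2 * ‖p.1‖ ^ 2 - ‖p.1 - p.2‖ ^ 2 / (2 * σ) - α / 2 * ‖p.2‖ ^ 2

variable {α σ δ : ℝ}

lemma gaussianKernelExponent_nonpos (hα : 0 < α) (hσ : 0 < σ) (hδ : 0 < δ)
    (h : σ ≤ 1 / δ - 1 / α) (p : E × E) : gaussianKernelExponent α σ δ p ≤ 0 := by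
  obtain ⟨x, y⟩ := p
  have hδσα : δ * (σ + 1 / α) ≤ 1 := by
    rw [le_sub_iff_add_le, le_div_iff₀ hδ] at h; linarith
  have hsq : ‖x‖ ^ 2 ≤ (σ + 1 / α) * (‖x - y‖ ^ 2 / σ + α * ‖y‖ ^ 2) := by
    calc ‖x‖ ^ 2 ≤ (‖x - y‖ + ‖y‖) ^ 2 := by
          gcongr; simpa using norm_add_le (x - y) y
      _ ≤ (σ + 1 / α) * (‖x - y‖ ^ 2 / σ + ‖y‖ ^ 2 / (1 / α)) :=
          sq_add_le_mul_div_add_div hσ (by positivity) _ _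
      _ = _ := by rw [div_div_eq_mul_div, div_one, mul_comm (‖y‖ ^ 2)]
  have hδx : δ * ‖x‖ ^ 2 ≤ ‖x - y‖ ^ 2 / σ + α * ‖y‖ ^ 2 :=
    calc δ * ‖x‖ ^ 2 ≤ δ * ((σ + 1 / α) * (‖x - y‖ ^ 2 / σ + α * ‖y‖ ^ 2)) := by gcongr
      _ ≤ 1 * (‖x - y‖ ^ 2 / σ + α * ‖y‖ ^ 2) := by rw [← mul_assoc]; gcongr
      _ = _ := one_mul _
  have halve : ‖x - y‖ ^ 2 / (2 * σ) = ‖x - y‖ ^ 2 / σ / 2 := by rw [div_div, mul_comm]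
  simp only [gaussianKernelExponent]
  linarith

lemma concaveOn_gaussianKernelExponent [InnerProductSpace ℝ E] (hα : 0 < α) (hσ : 0 < σ)
    (hδ : 0 < δ) (h : σ ≤ 1 / δ - 1 / α) :
    ConcaveOn ℝ univ (gaussianKernelExponent (E := E) α σ δ) := by
  refine ⟨convex_univ, fun p _ p' _ s t hs ht hst => ?_⟩
  have hdiff := gaussianKernelExponent_nonpos hα hσ hδ h (p - p')
  have hx := norm_smul_add_smul_sq hst p.1 p'.1
  have hy := norm_smul_add_smul_sq hst p.2 p'.2
  have hxy := norm_smul_add_smul_sq hst (p.1 - p.2) (p'.1 - p'.2)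
  rw [show s • (p.1 - p.2) + t • (p'.1 - p'.2) = (s • p + t • p').1 - (s • p + t • p').2 by
      simp only [Prod.fst_add, Prod.snd_add, Prod.smul_fst, Prod.smul_snd]; module,
    show p.1 - p.2 - (p'.1 - p'.2) = (p - p').1 - (p - p').2 by
      simp only [Prod.fst_sub, Prod.snd_sub]; abel] at hxy
  simp only [gaussianKernelExponent, smul_eq_mul, Prod.fst_add, Prod.snd_add, Prod.smul_fst,
    Prod.smul_snd, Prod.fst_sub, Prod.snd_sub] at hdiff hx hy hxy ⊢
  linear_combination (mul_nonpos_of_nonneg_of_nonpos (mul_nonneg hs ht) hdiff) - δ / 2 * hx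
    + hxy / (2 * σ) + α / 2 * hy

lemma exp_gaussianKernelExponent (x y : E) :
    exp (α / 2 * ‖y‖ ^ 2) * exp (gaussianKernelExponent α σ δ (x, y)) =
      exp (δ / 2 * ‖x‖ ^ 2) * exp (-‖x - y‖ ^ 2 / (2 * σ)) := by
  rw [← exp_add, ← exp_add, gaussianKernelExponent]
  ring_nf

variable [MeasurableSpace E] [OpensMeasurableSpace E] (ρ : Measure E)

lemma integral_exp_gaussianKernelExponent (x : E) :
    ∫ y, exp (gaussianKernelExponent α σ δ (x, y))
        ∂ρ.withDensity (fun y => ENNReal.ofReal (exp (α / 2 * ‖y‖ ^ 2))) =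
      exp (δ / 2 * ‖x‖ ^ 2) * ∫ y, exp (-‖x - y‖ ^ 2 / (2 * σ)) ∂ρ := by
  rw [integral_withDensity_ofReal (by fun_prop) fun _ => (exp_pos _).le]
  simp_rw [exp_gaussianKernelExponent]
  exact integral_const_mul _ _

lemma integrable_exp_gaussianKernelExponent [IsFiniteMeasure ρ] (hσ : 0 ≤ σ) (x : E) :
    Integrable (fun y => exp (gaussianKernelExponent α σ δ (x, y)))
      (ρ.withDensity fun y => ENNReal.ofReal (exp (α / 2 * ‖y‖ ^ 2))) := by
  rw [integrable_withDensity_ofReal_iff (by fun_prop) fun _ => (exp_pos _).le]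
  simp_rw [exp_gaussianKernelExponent]
  refine (Integrable.of_bound (Continuous.aestronglyMeasurable (by fun_prop)) 1
    (ae_of_all _ fun y => ?_)).const_mul _
  rw [norm_of_nonneg (exp_pos _).le, exp_le_one_iff]
  exact div_nonpos_of_nonpos_of_nonneg (neg_nonpos.2 (sq_nonneg _)) (by positivity)

end GaussianKernel

/-- If `ρ` is an `α`-super log-concave finite measure and
`1/δ - 1/α > σ` with `α, σ, δ > 0`, then the convolution of `ρ` with the Gaussian
kernel `p_σ (x) = exp (-|x|²/(2σ))` is `δ`-super log-concave; equivalently, the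
function `x ↦ exp (δ|x|²/2) * (ρ ⋆ p_σ)(x)` is log-concave. -/
theorem gaussian_convolution_superLogConcave {n : ℕ} (α σ δ : ℝ)
    (hα : 0 < α) (hσ : 0 < σ) (hδ : 0 < δ) (hcond : 1 / δ - 1 / α > σ)
    (ρ : Measure (EuclideanSpace ℝ (Fin n))) [IsFiniteMeasure ρ]
    (hρ : SuperLogConcave α ρ) :
    IsLogConcave
      (fun x => Real.exp (δ / 2 * ‖x‖ ^ 2) *
        ∫ y, Real.exp (-‖x - y‖ ^ 2 / (2 * σ)) ∂ρ) := by
  have hG := (concaveOn_gaussianKernelExponent (E := EuclideanSpace ℝ (Fin n)) hα hσ hδ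
    hcond.le).isLogConcave_exp
  have key := hρ.isLogConcave_integral (G := fun x y => exp (gaussianKernelExponent α σ δ (x, y)))
    hG (fun _ _ => (exp_pos _).le) (fun x => by unfold gaussianKernelExponent; fun_prop)
    (integrable_exp_gaussianKernelExponent ρ hσ.le)
  simpa only [integral_exp_gaussianKernelExponent] using key
end
end

section
/- Let (ρ_n)_{n≥1} be a sequence of finite Borel measures on ℝ^d converging weakly to a finite Borel measure ρ, and suppose that ρ_n is α_n-super log-concave for each n, where α_n ≥ 0. Then ρ is α₀-super log-concave with α₀ = inf_n α_n. -/
open MeasureTheory Pointwise ENNReal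

noncomputable section

/-!
Lowering `α` to `β` multiplies the tilted measure by the Gaussian weight
`exp ((β - α) / 2 * ‖x‖ ^ 2)`, which is log-concave; multiplying `a`, `b`, `c` by a log-concave
weight preserves the hypothesis of the Prékopa–Leindler inequality, so each `ρ_n` is
`α₀`-super log-concave. The Prékopa–Leindler property is tested on continuous compactly supported
functions, against which the `ρ_n` tilted by `exp (α₀ / 2 * ‖x‖ ^ 2)` converge to the tilted `ρ`,
so it passes to the limit.
-/

open Filter Topology

theorem integral_withDensity_ofReal_s11 {X : Type*} [MeasurableSpace X] {μ : Measure X}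
    {G : X → ℝ} (hG : Measurable G)
    (hG₀ : ∀ x, 0 ≤ G x) (f : X → ℝ) :
    ∫ x, f x ∂(μ.withDensity fun x => ENNReal.ofReal (G x)) = ∫ x, G x * f x ∂μ := by
  rw [integral_withDensity_eq_integral_toReal_smul hG.ennreal_ofReal
    (ae_of_all _ fun _ => ofReal_lt_top)]
  simp only [ENNReal.toReal_ofReal (hG₀ _), smul_eq_mul]

theorem tendsto_integral_withDensity_of_tendsto {X : Type*} [TopologicalSpace X]
    [MeasurableSpace X] [OpensMeasurableSpace X] {ρs : ℕ → Measure X} {ρ : Measure X}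
    (hconv : ∀ f : X → ℝ, Continuous f → (∃ C, ∀ x, |f x| ≤ C) →
      Tendsto (fun n => ∫ x, f x ∂(ρs n)) atTop (𝓝 (∫ x, f x ∂ρ)))
    {G : X → ℝ} (hG : Continuous G) (hG₀ : ∀ x, 0 ≤ G x)
    {f : X → ℝ} (hf : Continuous f) (hsf : HasCompactSupport f) :
    Tendsto (fun n => ∫ x, f x ∂((ρs n).withDensity fun x => ENNReal.ofReal (G x))) atTop
      (𝓝 (∫ x, f x ∂(ρ.withDensity fun x => ENNReal.ofReal (G x)))) := by
  simp only [integral_withDensity_ofReal_s11 hG.measurable hG₀]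
  obtain ⟨C, hC⟩ := hsf.mul_left.exists_bound_of_continuous (hG.mul hf)
  exact hconv _ (hG.mul hf) ⟨C, hC⟩

section PrekopaLeindler

variable {E : Type*} [AddCommGroup E] [Module ℝ E] [TopologicalSpace E] [MeasurableSpace E]

theorem PrekopaLeindler.withDensity [OpensMeasurableSpace E] {ρ : Measure E}
    (hρ : PrekopaLeindler ρ) {G : E → ℝ} (hG : Continuous G) (hG₀ : ∀ x, 0 ≤ G x)
    (hGlc : IsLogConcave G) :
    PrekopaLeindler (ρ.withDensity fun x => ENNReal.ofReal (G x)) := by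
  intro s t hs ht hst a b c ha hb hc hsa hsb hsc ha₀ hb₀ hc₀ habc
  simp only [integral_withDensity_ofReal_s11 hG.measurable hG₀]
  refine hρ s t hs ht hst (G * a) (G * b) (G * c) (hG.mul ha) (hG.mul hb) (hG.mul hc)
    hsa.mul_left hsb.mul_left hsc.mul_left (fun x => mul_nonneg (hG₀ x) (ha₀ x))
    (fun x => mul_nonneg (hG₀ x) (hb₀ x)) (fun x => mul_nonneg (hG₀ x) (hc₀ x)) fun x y => ?_
  calc (G * b) x ^ s * (G * c) y ^ t = (G x ^ s * G y ^ t) * (b x ^ s * c y ^ t) := by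
        simp only [Pi.mul_apply, Real.mul_rpow (hG₀ _) (hb₀ _), Real.mul_rpow (hG₀ _) (hc₀ _)]
        ring
    _ ≤ G (s • x + t • y) * a (s • x + t • y) :=
        mul_le_mul (hGlc x y s t hs ht hst) (habc x y)
          (mul_nonneg (Real.rpow_nonneg (hb₀ x) s) (Real.rpow_nonneg (hc₀ y) t)) (hG₀ _)

theorem PrekopaLeindler.of_tendsto {ρs : ℕ → Measure E} {ρ : Measure E}
    (hρs : ∀ n, PrekopaLeindler (ρs n))
    (hconv : ∀ f : E → ℝ, Continuous f → HasCompactSupport f →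
      Tendsto (fun n => ∫ x, f x ∂(ρs n)) atTop (𝓝 (∫ x, f x ∂ρ))) :
    PrekopaLeindler ρ := by
  intro s t hs ht hst a b c ha hb hc hsa hsb hsc ha₀ hb₀ hc₀ habc
  exact le_of_tendsto_of_tendsto'
    (((hconv b hb hsb).rpow_const (Or.inr hs)).mul ((hconv c hc hsc).rpow_const (Or.inr ht)))
    (hconv a ha hsa) fun n => hρs n s t hs ht hst a b c ha hb hc hsa hsb hsc ha₀ hb₀ hc₀ habc

end PrekopaLeindler

theorem isLogConcave_exp_mul_norm_sq {E : Type*} [NormedAddCommGroup E] [NormedSpace ℝ E]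
    {γ : ℝ} (hγ : γ ≤ 0) : IsLogConcave fun x : E => Real.exp (γ / 2 * ‖x‖ ^ 2) := by
  intro x y s t hs ht hst
  rw [← Real.exp_mul, ← Real.exp_mul, ← Real.exp_add, Real.exp_le_exp]
  have hconvex : ‖s • x + t • y‖ ^ 2 ≤ s * ‖x‖ ^ 2 + t * ‖y‖ ^ 2 :=
    (convexOn_univ_norm.pow (fun _ _ => norm_nonneg _) 2).2 (Set.mem_univ x) (Set.mem_univ y)
      hs ht hst
  nlinarith

theorem SuperLogConcave.mono {n : ℕ} {α β : ℝ} {ρ : Measure (EuclideanSpace ℝ (Fin n))}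
    (hρ : SuperLogConcave α ρ) (hβα : β ≤ α) : SuperLogConcave β ρ := by
  have hsplit : (fun x : EuclideanSpace ℝ (Fin n) => ENNReal.ofReal (Real.exp (β / 2 * ‖x‖ ^ 2)))
      = (fun x => ENNReal.ofReal (Real.exp (α / 2 * ‖x‖ ^ 2))) *
        fun x => ENNReal.ofReal (Real.exp ((β - α) / 2 * ‖x‖ ^ 2)) := by
    ext x
    rw [Pi.mul_apply, ← ENNReal.ofReal_mul (Real.exp_nonneg _), ← Real.exp_add]
    congr 2
    ring
  unfold SuperLogConcave
  rw [hsplit, withDensity_mul _ (by fun_prop) (by fun_prop)]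
  exact hρ.withDensity (by fun_prop) (fun _ => Real.exp_nonneg _)
    (isLogConcave_exp_mul_norm_sq (by linarith))

theorem superLogConcave_of_weak_limit_general {d : ℕ}
    (ρs : ℕ → Measure (EuclideanSpace ℝ (Fin d)))
    (ρ : Measure (EuclideanSpace ℝ (Fin d)))
    (α : ℕ → ℝ) (hα : ∀ n, 0 ≤ α n)
    (hSLC : ∀ n, SuperLogConcave (α n) (ρs n))
    (hconv : ∀ f : EuclideanSpace ℝ (Fin d) → ℝ, Continuous f → (∃ C, ∀ x, |f x| ≤ C) →
      Filter.Tendsto (fun n => ∫ x, f x ∂(ρs n)) Filter.atTop (nhds (∫ x, f x ∂ρ))) :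
    SuperLogConcave (⨅ n, α n) ρ := by
  have hαbdd : BddBelow (Set.range α) := ⟨0, by rintro _ ⟨n, rfl⟩; exact hα n⟩
  exact PrekopaLeindler.of_tendsto (fun n => (hSLC n).mono (ciInf_le hαbdd n))
    fun f hf hsf => tendsto_integral_withDensity_of_tendsto hconv (by fun_prop)
      (fun _ => Real.exp_nonneg _) hf hsf

/-- If `ρ_n` is `α_n`-super log-concave for each `n` and
`ρ_n → ρ` weakly, then `ρ` is `inf_n α_n`-super log-concave. -/
theorem superLogConcave_of_weak_limit {d : ℕ}
    (ρs : ℕ → Measure (EuclideanSpace ℝ (Fin d)))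
    (ρ : Measure (EuclideanSpace ℝ (Fin d)))
    [∀ n, IsFiniteMeasure (ρs n)] [IsFiniteMeasure ρ]
    (α : ℕ → ℝ) (hα : ∀ n, 0 ≤ α n)
    (hSLC : ∀ n, SuperLogConcave (α n) (ρs n))
    (hconv : ∀ f : EuclideanSpace ℝ (Fin d) → ℝ, Continuous f → (∃ C, ∀ x, |f x| ≤ C) →
      Filter.Tendsto (fun n => ∫ x, f x ∂(ρs n)) Filter.atTop (nhds (∫ x, f x ∂ρ))) :
    SuperLogConcave (⨅ n, α n) ρ :=
  superLogConcave_of_weak_limit_general ρs ρ α hα hSLC hconv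
end
end
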